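/- Let A = (s₁a₁)(s₂a₂)⋯ be a signed unimodal factorization where a₁a₂ is unimodal, a₂ is nonempty, a₁ is nonempty, s₁ ≠ 0 and s₂ = +. Then the odd operator ẽ₁̄ᶠ annihilates A; i.e., under the crystal structure transported through the primed Kraśkiewicz insertion, the corresponding primed tableau T has no 2 at position (1,1) and no 2′ in its first row. -/

import Mathlib

/-- A word is unimodal if it is strictly decreasing up to some index `m`
(0-based valley position) and strictly increasing from `m` on. -/
def Unimodal {α : Type*} [LinearOrder α] [Inhabited α] (a : List α) : Prop :=
  a = [] ∨ ∃ m, m < a.length ∧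
    (∀ i, i < m → a.getD (i + 1) default < a.getD i default) ∧
    (∀ i, m ≤ i → i + 1 < a.length → a.getD i default < a.getD (i + 1) default)

/-- The generators of the type `B` Coxeter group, realized as signed
permutations of `ℤ` (fixing everything outside `±{1,…,n}` when the indices are
below `n`): `s₀` is the sign change of `1` and `sᵢ` swaps `i, i+1` together
with `−i, −(i+1)`. -/
def genB : ℕ → Equiv.Perm ℤ := fun i =>
  if i = 0 then Equiv.swap 1 (-1)
  else Equiv.swap (i : ℤ) ((i : ℤ) + 1) * Equiv.swap (-(i : ℤ)) (-(i : ℤ) - 1)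

/-- The signed permutation corresponding to a word in the generators. -/
def wprodB (w : List ℕ) : Equiv.Perm ℤ := (w.map genB).prod

/-- The Coxeter length of an element of `W_B^n`: the minimal length of a word
in the generators `s₀, …, s_{n−1}` expressing it. -/
noncomputable def lengthB (n : ℕ) (p : Equiv.Perm ℤ) : ℕ :=
  sInf {l | ∃ w : List ℕ, (∀ x ∈ w, x < n) ∧ w.length = l ∧ wprodB w = p}

/-- A word in the generators `s₀, …, s_{n−1}` is reduced if its length equals
the Coxeter length of the element it represents. -/
def IsReducedWordB (n : ℕ) (w : List ℕ) : Prop :=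
  (∀ x ∈ w, x < n) ∧ lengthB n (wprodB w) = w.length

/-- Boolean test for a strictly increasing word. -/
def strIncB : List ℕ → Bool
  | [] => true
  | [_] => true
  | x :: y :: t => decide (x < y) && strIncB (y :: t)

/-- Boolean test for unimodality (strictly decreasing then strictly
increasing). -/
def unimodalB : List ℕ → Bool
  | [] => true
  | [_] => true
  | x :: y :: t => if y < x then unimodalB (y :: t) else decide (x < y) && strIncB (y :: t)

/-- The longest strictly decreasing prefix of a word: the decreasing part
`R↓` of a unimodal word `R`. -/
def decPrefix : List ℕ → List ℕ
  | [] => []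
  | [x] => [x]
  | x :: y :: t => if y < x then x :: decPrefix (y :: t) else [x]

/-- One letter of the Kraśkiewicz insertion: insert the letter `a` into the
tableau given as its list of rows (row `i` implicitly starting at column `i`). -/
def kIns : List (List ℕ) → ℕ → List (List ℕ)
  | [], a => [[a]]
  | R :: rest, a =>
    if unimodalB (R ++ [a]) then (R ++ [a]) :: rest
    else if a == 0 && [1, 0, 1].isSublist R then R :: kIns rest 0
    else
      let Rdn := decPrefix R
      let Rup := R.drop Rdn.length
      match Rup.find? (fun z => decide (a ≤ z)) with
      | none => R :: rest
      | some b =>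
        let Rup' := if b = a then Rup else Rup.replace b a
        let c := if b = a then a + 1 else b
        match Rdn.find? (fun z => decide (z ≤ c)) with
        | none => R :: rest
        | some d =>
          let Rdn' := if d = c then Rdn else Rdn.replace d c
          let a' := if d = c then c - 1 else d
          (Rdn' ++ Rup') :: kIns rest a'

/-- The Kraśkiewicz insertion tableau of a word. -/
def kPTab (w : List ℕ) : List (List ℕ) := w.foldl kIns []

/-- The position (0-based row, column) of the new box created by an insertion,
obtained by comparing the shapes of the tableaux before and after. -/
def newBox (t t' : List (List ℕ)) : ℕ × ℕ :=
  match (List.range t'.length).find? (fun i =>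
      decide ((t.map List.length).getD i 0 ≠ (t'.map List.length).getD i 0)) with
  | some i => (i, i + (t.map List.length).getD i 0)
  | none => (0, 0)

/-- The sequence of new boxes created when the letters of `a` are
Kraśkiewicz-inserted, one by one, into the tableau `t`. -/
def newBoxes (t : List (List ℕ)) (a : List ℕ) : List (ℕ × ℕ) :=
  (a.foldl (fun st z => (kIns st.1 z, st.2 ++ [newBox st.1 (kIns st.1 z)]))
    ((t, []) : List (List ℕ) × List (ℕ × ℕ))).2

/-
Because `a₁ a₂` is unimodal, every prefix of it is unimodal, so Kraśkiewicz insertion never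
bumps: inserting `a₁` builds the one-row tableau `[a₁]`, and each letter of `a₂` is then simply
appended to that row.  Hence the vee of the second factor lies in the first row, in the
columns `|a₁|, …, |a₁| + |a₂| - 1`: it misses the corner `(0, 0)` since `a₁ ≠ []`, and it never
descends, so its bottom index is `1` and no `2′` is written in the first row.
-/

lemma strIncB_eq_true_of_getD_lt (l : List ℕ)
    (h : ∀ i, i + 1 < l.length → l.getD i 0 < l.getD (i + 1) 0) : strIncB l = true := by
  induction l using strIncB.induct with
  | case1 => rfl
  | case2 => rfl
  | case3 x y t ih =>
    have hxy : x < y := by simpa using h 0 (by simp)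
    have ht : strIncB (y :: t) = true := ih fun i hi => by simpa using h (i + 1) (by simpa using hi)
    simp [strIncB, hxy, ht]

lemma unimodalB_eq_true_of_unimodal (l : List ℕ) (h : Unimodal l) : unimodalB l = true := by
  induction l using unimodalB.induct with
  | case1 => rfl
  | case2 => rfl
  | case3 x y t hyx ih =>
    obtain h | ⟨m, hm, hdec, hinc⟩ := h
    · simp at h
    have hm0 : m ≠ 0 := by
      rintro rfl
      have := hinc 0 le_rfl (by simp)
      simp at this
      omega
    have htail : Unimodal (y :: t) := by
      refine Or.inr ⟨m - 1, by simp at hm ⊢; omega, fun i hi => ?_, fun i hi hlen => ?_⟩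
      · simpa using hdec (i + 1) (by omega)
      · simpa using hinc (i + 1) (by omega) (by simp at hlen ⊢; omega)
    simp [unimodalB, hyx, ih htail]
  | case4 x y t hyx =>
    obtain h | ⟨m, hm, hdec, hinc⟩ := h
    · simp at h
    have hm0 : m = 0 := by
      by_contra hne
      have := hdec 0 (by omega)
      simp at this
      omega
    subst hm0
    have hxy : x < y := by simpa using hinc 0 le_rfl (by simp)
    have ht : strIncB (y :: t) = true := strIncB_eq_true_of_getD_lt _ fun i hlen => by
      simpa using hinc (i + 1) (by omega) (by simp at hlen ⊢; omega)
    simp [unimodalB, hyx, hxy, ht]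

lemma strIncB_take (l : List ℕ) (k : ℕ) (h : strIncB l = true) : strIncB (l.take k) = true := by
  induction l using strIncB.induct generalizing k with
  | case1 => simp [strIncB]
  | case2 => cases k <;> simp [strIncB]
  | case3 x y t ih =>
    match k with
    | 0 | 1 => rfl
    | k + 2 =>
      simp only [List.take_succ_cons, strIncB, Bool.and_eq_true, decide_eq_true_eq] at h ⊢
      exact ⟨h.1, ih (k + 1) h.2⟩

lemma unimodalB_take (l : List ℕ) (k : ℕ) (h : unimodalB l = true) :
    unimodalB (l.take k) = true := by
  induction l using unimodalB.induct generalizing k with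
  | case1 => simp [unimodalB]
  | case2 => cases k <;> simp [unimodalB]
  | case3 x y t hyx ih =>
    match k with
    | 0 | 1 => rfl
    | k + 2 =>
      simp only [List.take_succ_cons, unimodalB, if_pos hyx] at h ⊢
      exact ih (k + 1) h
  | case4 x y t hyx =>
    match k with
    | 0 | 1 => rfl
    | k + 2 =>
      simp only [List.take_succ_cons, unimodalB, if_neg hyx, Bool.and_eq_true,
        decide_eq_true_eq] at h ⊢
      exact ⟨h.1, strIncB_take _ (k + 1) h.2⟩

lemma unimodalB_of_append_left {u v : List ℕ} (h : unimodalB (u ++ v) = true) :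
    unimodalB u = true := by
  simpa using unimodalB_take (u ++ v) u.length h

lemma kIns_cons_of_unimodalB {R : List ℕ} (rest : List (List ℕ)) {z : ℕ}
    (h : unimodalB (R ++ [z]) = true) : kIns (R :: rest) z = (R ++ [z]) :: rest := by
  simp [kIns, h]

lemma kPTab_of_unimodalB {w : List ℕ} (hw : w ≠ []) (h : unimodalB w = true) : kPTab w = [w] := by
  induction w using List.reverseRecOn with
  | nil => contradiction
  | append_singleton u z ih =>
    have hsnoc : kPTab (u ++ [z]) = kIns (kPTab u) z := List.foldl_append ..
    rcases eq_or_ne u [] with rfl | hu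
    · rfl
    · rw [hsnoc, ih hu (unimodalB_of_append_left h), kIns_cons_of_unimodalB _ h]

lemma foldl_prod_append_snd {α β γ : Type*} (f : α → β → α) (g : α → β → γ) (a : List β)
    (t : α) (l : List γ) :
    a.foldl (fun st z => (f st.1 z, st.2 ++ [g st.1 z])) (t, l) =
      ((a.foldl (fun st z => (f st.1 z, st.2 ++ [g st.1 z])) (t, [])).1,
        l ++ (a.foldl (fun st z => (f st.1 z, st.2 ++ [g st.1 z])) (t, [])).2) := by
  induction a generalizing t l with
  | nil => simp
  | cons z a ih =>
    rw [List.foldl_cons, List.foldl_cons, ih, ih (f t z) ([] ++ _)]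
    simp

lemma newBoxes_cons (t : List (List ℕ)) (z : ℕ) (a : List ℕ) :
    newBoxes t (z :: a) = newBox t (kIns t z) :: newBoxes (kIns t z) a := by
  simp only [newBoxes, List.foldl_cons]
  rw [foldl_prod_append_snd kIns (fun t z => newBox t (kIns t z))]
  rfl

lemma newBox_append_singleton (R : List ℕ) (z : ℕ) : newBox [R] [R ++ [z]] = (0, R.length) := by
  simp [newBox, List.range_succ]

lemma newBoxes_of_unimodalB (R a : List ℕ) (h : unimodalB (R ++ a) = true) :
    newBoxes [R] a = (List.range' R.length a.length).map (Prod.mk 0) := by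
  induction a generalizing R with
  | nil => rfl
  | cons z a ih =>
    have hz : unimodalB (R ++ [z]) = true :=
      unimodalB_of_append_left (v := a) (by simpa using h)
    rw [newBoxes_cons, kIns_cons_of_unimodalB _ hz, newBox_append_singleton,
      ih _ (by simpa using h)]
    simp [List.range'_succ]

theorem stmt18_general (a₁ a₂ : List ℕ) (hne₁ : a₁ ≠ [])
    (huni : Unimodal (a₁ ++ a₂)) :
    (0, 0) ∉ newBoxes (kPTab a₁) a₂ ∧
    (2 ≤ (newBoxes (kPTab a₁) a₂).length →
      ((newBoxes (kPTab a₁) a₂).getD 0 (0, 0)).1 = 0 →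
      ¬ ((newBoxes (kPTab a₁) a₂).getD 0 (0, 0)).1
          < ((newBoxes (kPTab a₁) a₂).getD 1 (0, 0)).1) := by
  have huniB := unimodalB_eq_true_of_unimodal _ huni
  have hboxes : newBoxes (kPTab a₁) a₂ = (List.range' a₁.length a₂.length).map (Prod.mk 0) := by
    rw [kPTab_of_unimodalB hne₁ (unimodalB_of_append_left huniB),
      newBoxes_of_unimodalB _ _ huniB]
  rw [hboxes]
  refine ⟨by simp [hne₁], fun _ _ => ?_⟩
  simp [List.getD_eq_getElem?_getD]

/-- Let `A = (s₁ a₁)(s₂ a₂)⋯` be a signed unimodal factorization of a reduced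
word of the type `B` Coxeter group with `a₁ a₂` unimodal, `a₁, a₂` nonempty
(`s₁ ≠ 0`) and `s₂ = +`.  Then `ẽ₁̄ᶠ` annihilates `A`: in the signed primed
tableau `T` recording the primed Kraśkiewicz insertion of `A`, the boxes of
the second factor's vee avoid the cell `(1,1)` (so `T₁,₁ ≠ 2`), and the vee
has bottom index `1` whenever its first box lies in the first row, so (the
bottom box being unprimed since `s₂ = +`) no `2′` occurs in the first row of
`T`. -/
theorem stmt18 (n : ℕ) (a₁ a₂ : List ℕ) (rest : List (List ℕ))
    (h₁ : Unimodal a₁) (h₂ : Unimodal a₂) (hne₁ : a₁ ≠ []) (hne₂ : a₂ ≠ [])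
    (huni : Unimodal (a₁ ++ a₂))
    (hrest : ∀ r ∈ rest, Unimodal r)
    (hred : IsReducedWordB n (a₁ ++ a₂ ++ rest.flatten)) :
    (0, 0) ∉ newBoxes (kPTab a₁) a₂ ∧
    (2 ≤ (newBoxes (kPTab a₁) a₂).length →
      ((newBoxes (kPTab a₁) a₂).getD 0 (0, 0)).1 = 0 →
      ¬ ((newBoxes (kPTab a₁) a₂).getD 0 (0, 0)).1
          < ((newBoxes (kPTab a₁) a₂).getD 1 (0, 0)).1) :=
  stmt18_general a₁ a₂ hne₁ huni
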